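/- Let A and A1 be disjoint c.e. subsets of ℕ such that A ∪ A1 is r-maximal. If A is not Type 1, not Type 2, and not Type 3, then A is Type 10. -/

import Mathlib

open Set Function

/-- A set of naturals is computably enumerable (c.e.) -/
def CESet (A : Set ℕ) : Prop := REPred (· ∈ A)

/-- A set of naturals is computable -/
def ComputableSet (A : Set ℕ) : Prop := ComputablePred (· ∈ A)

/-- X ⊆* Y : X is almost contained in Y -/
def SubsetStar (X Y : Set ℕ) : Prop := (X \ Y).Finite

/-- X =* Y : X and Y differ by a finite set -/
def EqStar (X Y : Set ℕ) : Prop := (X \ Y).Finite ∧ (Y \ X).Finite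

/-- G is a generating set for 𝒟(A): a countable family of c.e. sets, each disjoint
from A, such that every c.e. set disjoint from A is almost covered by finitely many
members of G. -/
def Generates (A : Set ℕ) (G : Set (Set ℕ)) : Prop :=
  G.Countable ∧ (∀ X ∈ G, CESet X) ∧ (∀ X ∈ G, Disjoint X A) ∧
  ∀ D : Set ℕ, CESet D → Disjoint D A →
    ∃ F : Set (Set ℕ), F ⊆ G ∧ F.Finite ∧ SubsetStar D (⋃₀ F)

/-- S is simple -/
def SimpleSet (S : Set ℕ) : Prop :=
  CESet S ∧ Sᶜ.Infinite ∧ ∀ W : Set ℕ, CESet W → Disjoint W S → W.Finite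

/-- A is 𝒟-maximal -/
def DMaximal (A : Set ℕ) : Prop :=
  CESet A ∧ ∀ W : Set ℕ, CESet W → ∃ D : Set ℕ, CESet D ∧ Disjoint D A ∧
    (SubsetStar W (A ∪ D) ∨ EqStar (W ∪ A ∪ D) Set.univ)

/-- M is r-maximal -/
def RMaximal (M : Set ℕ) : Prop :=
  CESet M ∧ Mᶜ.Infinite ∧
    ∀ R : Set ℕ, ComputableSet R → (R ∩ Mᶜ).Finite ∨ (Rᶜ ∩ Mᶜ).Finite

/-- M is maximal -/
def MaximalSet (M : Set ℕ) : Prop :=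
  CESet M ∧ Mᶜ.Infinite ∧
    ∀ W : Set ℕ, CESet W → M ⊆ W → (W \ M).Finite ∨ Wᶜ.Finite

/-- B is atomless -/
def AtomlessSet (B : Set ℕ) : Prop :=
  ∀ C : Set ℕ, CESet C → B ⊆ C → Cᶜ.Infinite →
    ∃ E : Set ℕ, CESet E ∧ SubsetStar C E ∧ (E \ C).Infinite ∧ Eᶜ.Infinite

/-- A0, A1 form a Friedberg splitting of A -/
def FriedbergSplitting (A0 A1 A : Set ℕ) : Prop :=
  CESet A0 ∧ CESet A1 ∧ Disjoint A0 A1 ∧ A0 ∪ A1 = A ∧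
    ∀ W : Set ℕ, CESet W → ¬ CESet (W \ A) → ¬ CESet (W \ A0) ∧ ¬ CESet (W \ A1)

/-- E is a major subset of D -/
def MajorIn (E D : Set ℕ) : Prop :=
  CESet E ∧ CESet D ∧ E ⊆ D ∧ (D \ E).Infinite ∧
    ∀ W : Set ℕ, CESet W → SubsetStar Dᶜ W → SubsetStar Eᶜ W

/-- H is hh-simple: the lattice of c.e. supersets of H mod finite is a boolean algebra -/
def HHSimple (H : Set ℕ) : Prop :=
  CESet H ∧ Hᶜ.Infinite ∧
    ∀ W : Set ℕ, CESet W → ∃ V : Set ℕ, CESet V ∧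
      EqStar ((W ∪ H) ∩ (V ∪ H)) H ∧ EqStar (W ∪ V ∪ H) Set.univ

/-- A is strongly r-separable -/
def StronglyRSeparable (A : Set ℕ) : Prop :=
  ∀ B : Set ℕ, CESet B → Disjoint B A →
    ∃ C : Set ℕ, ComputableSet C ∧ B ⊆ C ∧ Disjoint C A ∧ (C \ B).Infinite

/-- Structure of a Type 5 generating family: D0 together with the R_i. -/
def Type5Family (D0 : Set ℕ) (R : ℕ → Set ℕ) : Prop :=
  CESet D0 ∧ ¬ ComputableSet D0 ∧ D0.Infinite ∧
  Function.Injective R ∧ (∀ i, D0 ≠ R i) ∧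
  (∀ i, ComputableSet (R i) ∧ (R i).Infinite) ∧
  Pairwise (Function.onFun Disjoint R) ∧
  (∀ i, Disjoint D0 (R i))

/-- Structure of a Type 7 generating family: D0 together with the R_i. -/
def Type7Family (D0 : Set ℕ) (R : ℕ → Set ℕ) : Prop :=
  CESet D0 ∧ ¬ ComputableSet D0 ∧
  Function.Injective R ∧ (∀ i, D0 ≠ R i) ∧
  (∀ i, ComputableSet (R i) ∧ (R i).Infinite) ∧
  Pairwise (Function.onFun Disjoint R) ∧
  {i : ℕ | (D0 ∩ R i).Nonempty}.Infinite

/-- Structure of a Type 8 generating family: the D_i together with the R_i. -/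
def Type8Family (D R : ℕ → Set ℕ) : Prop :=
  Function.Injective D ∧ Function.Injective R ∧ (∀ i j, D i ≠ R j) ∧
  (∀ i, CESet (D i) ∧ ¬ ComputableSet (D i)) ∧
  Pairwise (Function.onFun Disjoint D) ∧
  (∀ i, ComputableSet (R i) ∧ (R i).Infinite) ∧
  Pairwise (Function.onFun Disjoint R)

/-- Structure of a Type 9 generating family: the nested D_i together with the R_i. -/
def Type9Family (D R : ℕ → Set ℕ) : Prop :=
  Function.Injective R ∧ (∀ i j, D i ≠ R j) ∧
  (∀ i, ComputableSet (R i) ∧ (R i).Infinite) ∧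
  Pairwise (Function.onFun Disjoint R) ∧
  (∀ i, CESet (D i) ∧ ¬ ComputableSet (D i) ∧ (D i).Infinite) ∧
  (∀ l, D l ⊆ D (l + 1)) ∧
  (∀ l, ¬ CESet (D (l + 1) \ D l)) ∧
  (∀ l, {j : ℕ | (R j \ D l).Infinite}.Infinite)

def IsType1 (G : Set (Set ℕ)) : Prop := G = {∅}

def IsType2 (G : Set (Set ℕ)) : Prop :=
  ∃ R : Set ℕ, G = {R} ∧ ComputableSet R ∧ R.Infinite

def IsType3 (G : Set (Set ℕ)) : Prop :=
  ∃ W : Set ℕ, G = {W} ∧ CESet W ∧ ¬ ComputableSet W ∧ W.Infinite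

def IsType4 (G : Set (Set ℕ)) : Prop :=
  ∃ R : ℕ → Set ℕ, G = Set.range R ∧ Function.Injective R ∧
    (∀ i, ComputableSet (R i) ∧ (R i).Infinite) ∧
    Pairwise (Function.onFun Disjoint R)

def IsType5 (G : Set (Set ℕ)) : Prop :=
  ∃ (D0 : Set ℕ) (R : ℕ → Set ℕ), G = insert D0 (Set.range R) ∧ Type5Family D0 R

def IsType6 (G : Set (Set ℕ)) : Prop :=
  ∃ D : ℕ → Set ℕ, G = Set.range D ∧ Function.Injective D ∧
    (∀ i, CESet (D i) ∧ ¬ ComputableSet (D i) ∧ (D i).Infinite) ∧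
    Pairwise (Function.onFun Disjoint D)

def IsType7 (G : Set (Set ℕ)) : Prop :=
  ∃ (D0 : Set ℕ) (R : ℕ → Set ℕ), G = insert D0 (Set.range R) ∧ Type7Family D0 R

def IsType8 (G : Set (Set ℕ)) : Prop :=
  ∃ D R : ℕ → Set ℕ, G = Set.range D ∪ Set.range R ∧ Type8Family D R

def IsType9 (G : Set (Set ℕ)) : Prop :=
  ∃ D R : ℕ → Set ℕ, G = Set.range D ∪ Set.range R ∧ Type9Family D R

def IsType10 (G : Set (Set ℕ)) : Prop :=
  ∃ D : ℕ → Set ℕ, G = Set.range D ∧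
    (∀ i, CESet (D i) ∧ ¬ ComputableSet (D i) ∧ (D i).Infinite) ∧
    (∀ l, D l ⊆ D (l + 1)) ∧
    (∀ l, ¬ CESet (D (l + 1) \ D l))

/-- G is a generating set of Type n (n = 1, …, 10). -/
def GenTypeN (n : ℕ) (G : Set (Set ℕ)) : Prop :=
  match n with
  | 1 => IsType1 G
  | 2 => IsType2 G
  | 3 => IsType3 G
  | 4 => IsType4 G
  | 5 => IsType5 G
  | 6 => IsType6 G
  | 7 => IsType7 G
  | 8 => IsType8 G
  | 9 => IsType9 G
  | 10 => IsType10 G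
  | _ => False

/-- The c.e. set A is of Type n: 𝒟(A) has a generating set of Type n
but no generating set of any Type m < n. -/
def SetOfType (A : Set ℕ) (n : ℕ) : Prop :=
  (∃ G : Set (Set ℕ), Generates A G ∧ GenTypeN n G) ∧
  ∀ m : ℕ, m < n → ¬ ∃ G : Set (Set ℕ), Generates A G ∧ GenTypeN m G

/-- (F_i) is an A-special list. -/
def ASpecialList (A : Set ℕ) (F : ℕ → Set ℕ) : Prop :=
  F 0 = A ∧ (∀ i, CESet (F i) ∧ ¬ ComputableSet (F i)) ∧
  Pairwise (Function.onFun Disjoint F) ∧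
  ∀ W : Set ℕ, CESet W → ∃ i : ℕ,
    SubsetStar W (⋃ l ≤ i, F l) ∨ EqStar (W ∪ ⋃ l ≤ i, F l) Set.univ

/-!
Write `M = A ∪ A1`. As `A` is not of Type 1, 2 or 3, no single c.e. set generates `𝒟(A)`.
Applied to `A1 ∪ E`, this says that no c.e. set `E` disjoint from `A` covers `Mᶜ` up to a finite
set; so by r-maximality every computable set disjoint from `A` meets `Mᶜ` finitely, and, since an
infinite c.e. set has an infinite computable subset, every infinite c.e. set disjoint from `A`
meets `A1` infinitely. Hence in a generating set infinitely many members meet `Mᶜ` infinitely.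
This excludes Types 4–8, whose members are computable or pairwise disjoint. Type 9 fails because
some `R_j` not among the finitely many members covering `A1` escapes the `D_l` among them.
Finally, enumerating the c.e. sets disjoint from `A` and adjoining at each step the next one
together with a c.e. set growing infinitely into `Mᶜ` yields a Type 10 tower above `A1`; its
differences lie in `Mᶜ`, so they are not c.e.
-/
open Nat.Partrec (Code)
open Nat.Partrec.Code

theorem REPred.and {α : Type*} [Primcodable α] {p q : α → Prop} (hp : REPred p)
    (hq : REPred q) : REPred fun a => p a ∧ q a := by
  have := hp.bind (f := fun a => Part.assert (p a) fun _ => Part.some ())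
    (g := fun a (_ : Unit) => Part.assert (q a) fun _ => Part.some ())
    (hq.comp Computable.fst).to₂
  refine this.of_eq fun a => ?_
  ext u
  simp [Part.assert, Part.mem_bind_iff]

theorem REPred.or {α : Type*} [Primcodable α] {p q : α → Prop} (hp : REPred p)
    (hq : REPred q) : REPred fun a => p a ∨ q a := by
  obtain ⟨k, pk, hk⟩ := Partrec.merge' hp hq
  refine pk.dom_re.of_eq fun a => ?_
  rw [(hk a).2]
  simp [Part.assert]

theorem ComputableSet.ceSet {R : Set ℕ} (hR : ComputableSet R) : CESet R :=
  ComputablePred.to_re hR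

theorem computableSet_empty : ComputableSet (∅ : Set ℕ) :=
  ⟨fun _ => instDecidableFalse, by simpa using Computable.const false⟩

theorem ceSet_empty : CESet (∅ : Set ℕ) := computableSet_empty.ceSet

theorem CESet.union {X Y : Set ℕ} (hX : CESet X) (hY : CESet Y) : CESet (X ∪ Y) :=
  hX.or hY

theorem CESet.diff {X R : Set ℕ} (hX : CESet X) (hR : ComputableSet R) : CESet (X \ R) :=
  hX.and (ComputablePred.not hR).to_re

theorem ComputableSet.union {X Y : Set ℕ} (hX : ComputableSet X) (hY : ComputableSet Y) :
    ComputableSet (X ∪ Y) := by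
  classical
  rw [ComputableSet, computablePred_iff_computable_decide] at *
  exact (Primrec.or.to_comp.comp hX hY).of_eq fun a => by simp [mem_union]

theorem ceSet_sUnion {F : Set (Set ℕ)} (hF : F.Finite) (h : ∀ X ∈ F, CESet X) :
    CESet (⋃₀ F) := by
  induction F, hF using Set.Finite.induction_on with
  | empty => simpa using ceSet_empty
  | insert _ _ ih =>
    rw [sUnion_insert]
    exact (h _ (mem_insert _ _)).union (ih fun X hX => h X (mem_insert_of_mem _ hX))

theorem computableSet_sUnion {F : Set (Set ℕ)} (hF : F.Finite) (h : ∀ X ∈ F, ComputableSet X) :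
    ComputableSet (⋃₀ F) := by
  induction F, hF using Set.Finite.induction_on with
  | empty => simpa using computableSet_empty
  | insert _ _ ih =>
    rw [sUnion_insert]
    exact (h _ (mem_insert _ _)).union (ih fun X hX => h X (mem_insert_of_mem _ hX))

theorem CESet.exists_code {C : Set ℕ} (hC : CESet C) :
    ∃ c : Code, ∀ a, (c.eval a).Dom ↔ a ∈ C := by
  have : Partrec fun a => (Part.assert (a ∈ C) fun _ => Part.some ()).map fun _ => 0 :=
    hC.map ((Computable.const 0).comp Computable.fst).to₂
  obtain ⟨c, hc⟩ := Nat.Partrec.Code.exists_code.mp (Partrec.nat_iff.mp this)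
  exact ⟨c, fun a => by simp [hc, Part.assert]⟩

theorem countable_setOf_ceSet : {X : Set ℕ | CESet X}.Countable :=
  (countable_range fun c : Code => {a | (c.eval a).Dom}).mono fun X hX => by
    obtain ⟨c, hc⟩ := CESet.exists_code hX
    exact ⟨c, ext hc⟩

theorem CESet.exists_computable_gt {C : Set ℕ} (hC : CESet C) (hinf : C.Infinite) :
    ∃ g : ℕ → ℕ, Computable g ∧ ∀ m, m < g m ∧ g m ∈ C := by
  obtain ⟨c, hc⟩ := hC.exists_code
  -- `P m (Nat.pair k x)`: the code of `C` halts on an input `x > m` within `k` steps.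
  let P : ℕ → ℕ → Prop := fun m p => m < p.unpair.2 ∧ (evaln p.unpair.1 c p.unpair.2).isSome
  have hP : ∀ m, ∃ p, P m p := fun m => by
    obtain ⟨x, hxC, hmx⟩ := hinf.exists_gt m
    obtain ⟨v, hv⟩ := Part.dom_iff_mem.mp ((hc x).mpr hxC)
    obtain ⟨k, hk⟩ := evaln_complete.mp hv
    exact ⟨Nat.pair k x, by simpa [P, hmx] using Option.isSome_iff_exists.mpr ⟨v, hk⟩⟩
  have hPc : ComputablePred fun q : ℕ × ℕ => P q.1 q.2 := by
    have hunpair := Primrec.unpair.comp (Primrec.snd (α := ℕ) (β := ℕ))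
    refine PrimrecPred.computablePred ?_
    exact (Primrec.nat_lt.comp Primrec.fst (Primrec.snd.comp hunpair)).and
      (Primrec.primrecPred (by simpa using Primrec.option_isSome.comp (primrec_evaln.comp
        (((Primrec.fst.comp hunpair).pair (Primrec.const c)).pair (Primrec.snd.comp hunpair)))))
  refine ⟨fun m => (Nat.find (hP m)).unpair.2,
    Computable.snd.comp (Computable.unpair.comp (Computable.find hPc hP)), fun m => ?_⟩
  obtain ⟨hlt, hhalt⟩ := Nat.find_spec (hP m)
  obtain ⟨v, hv⟩ := Option.isSome_iff_exists.mp hhalt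
  exact ⟨hlt, (hc _).mp (Part.dom_iff_mem.mpr ⟨v, evaln_sound hv⟩)⟩

theorem computableSet_range_of_strictMono {u : ℕ → ℕ} (hu : Computable u) (hmono : StrictMono u) :
    ComputableSet (range u) := by
  classical
  have hex : ∀ x, ∃ n, x ≤ u n := fun x => ⟨x, hmono.id_le x⟩
  have hfind : Computable fun x => Nat.find (hex x) :=
    Computable.find (Primrec.nat_le.decide.to_comp.comp Computable.fst
      (hu.comp Computable.snd)).computablePred hex
  have hmem : ∀ x, x ∈ range u ↔ u (Nat.find (hex x)) = x := fun x => by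
    refine ⟨fun ⟨m, hm⟩ => le_antisymm ?_ (Nat.find_spec (hex x)), fun h => ⟨_, h⟩⟩
    subst hm
    exact hmono.monotone (Nat.find_min' _ le_rfl)
  exact ((Primrec.eq.decide.to_comp.comp (hu.comp hfind) Computable.id).computablePred).of_eq
    fun x => (hmem x).symm

theorem CESet.exists_computable_subset {C : Set ℕ} (hC : CESet C) (hinf : C.Infinite) :
    ∃ R : Set ℕ, ComputableSet R ∧ R ⊆ C ∧ R.Infinite := by
  obtain ⟨g, hg, hgC⟩ := hC.exists_computable_gt hinf
  let u : ℕ → ℕ := fun n => Nat.rec (g 0) (fun _ ih => g ih) n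
  have hu : Computable u := Computable.nat_rec Computable.id (Computable.const (g 0))
    (hg.comp (Computable.snd.comp Computable.snd)).to₂
  have hmono : StrictMono u := strictMono_nat_of_lt_succ fun n => (hgC (u n)).1
  refine ⟨range u, computableSet_range_of_strictMono hu hmono, ?_,
    infinite_range_of_injective hmono.injective⟩
  rintro _ ⟨n, rfl⟩
  cases n <;> exact (hgC _).2

theorem Generates.ceSet {A : Set ℕ} {G : Set (Set ℕ)} (hG : Generates A G) {X : Set ℕ}
    (hX : X ∈ G) : CESet X :=
  hG.2.1 X hX

theorem Generates.disjoint {A : Set ℕ} {G : Set (Set ℕ)} (hG : Generates A G) {X : Set ℕ}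
    (hX : X ∈ G) : Disjoint X A :=
  hG.2.2.1 X hX

theorem Generates.exists_subsetStar {A : Set ℕ} {G : Set (Set ℕ)} (hG : Generates A G)
    {D : Set ℕ} (hD : CESet D) (hDA : Disjoint D A) :
    ∃ F ⊆ G, F.Finite ∧ SubsetStar D (⋃₀ F) :=
  hG.2.2.2 D hD hDA

def HasGenOfType (A : Set ℕ) (n : ℕ) : Prop :=
  ∃ G : Set (Set ℕ), Generates A G ∧ GenTypeN n G

theorem not_hasGenOfType_zero {A : Set ℕ} : ¬ HasGenOfType A 0 := fun ⟨_, _, h⟩ => h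

theorem exists_le_setOfType {A : Set ℕ} {n : ℕ} (h : HasGenOfType A n) :
    ∃ m ≤ n, SetOfType A m := by
  classical
  have hex : ∃ m, HasGenOfType A m := ⟨n, h⟩
  exact ⟨Nat.find hex, Nat.find_min' hex h, Nat.find_spec hex, fun m hm => Nat.find_min hex hm⟩

theorem generates_of_forall_subsetStar {A : Set ℕ} {G : Set (Set ℕ)} (hG : G.Countable)
    (hce : ∀ X ∈ G, CESet X) (hdisj : ∀ X ∈ G, Disjoint X A)
    (hcov : ∀ D, CESet D → Disjoint D A → ∃ X ∈ G, SubsetStar D X) : Generates A G := by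
  refine ⟨hG, hce, hdisj, fun D hD hDA => ?_⟩
  obtain ⟨X, hX, hDX⟩ := hcov D hD hDA
  exact ⟨{X}, singleton_subset_iff.mpr hX, finite_singleton X, by simpa [SubsetStar]⟩

theorem generates_singleton {A X : Set ℕ} (hX : CESet X) (hXA : Disjoint X A)
    (hcov : ∀ D, CESet D → Disjoint D A → SubsetStar D X) : Generates A {X} :=
  generates_of_forall_subsetStar (countable_singleton X) (by simpa using hX)
    (by simpa using hXA) fun D hD hDA => ⟨X, rfl, hcov D hD hDA⟩

theorem exists_le_three_hasGenOfType_of_generates_singleton {A X : Set ℕ} (h : Generates A {X}) :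
    ∃ n ≤ 3, HasGenOfType A n := by
  by_cases hfin : X.Finite
  · refine ⟨1, by norm_num, {∅}, generates_singleton ceSet_empty (empty_disjoint A)
      fun D hD hDA => ?_, rfl⟩
    obtain ⟨F, hFX, -, hDF⟩ := h.exists_subsetStar hD hDA
    have hFX' : ⋃₀ F ⊆ X := sUnion_subset fun Y hY => (hFX hY).le
    refine (hDF.union hfin).subset fun x hx => ?_
    by_cases hxF : x ∈ ⋃₀ F
    · exact Or.inr (hFX' hxF)
    · exact Or.inl ⟨hx.1, hxF⟩
  by_cases hcomp : ComputableSet X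
  · exact ⟨2, by norm_num, {X}, h, X, rfl, hcomp, hfin⟩
  · exact ⟨3, le_rfl, {X}, h, X, rfl, h.ceSet rfl, hcomp, hfin⟩

theorem exists_ceSet_diff_infinite {A : Set ℕ} (hsingle : ∀ X, ¬ Generates A {X}) {X : Set ℕ}
    (hX : CESet X) (hXA : Disjoint X A) : ∃ W, CESet W ∧ Disjoint W A ∧ (W \ X).Infinite := by
  by_contra! h
  exact hsingle X (generates_singleton hX hXA h)

theorem Set.Countable.exists_cofinal_chain {α : Type*} {𝒮 : Set (Set α)} (h𝒮 : 𝒮.Countable)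
    (hunion : ∀ X ∈ 𝒮, ∀ Y ∈ 𝒮, X ∪ Y ∈ 𝒮) (hgrow : ∀ X ∈ 𝒮, ∃ W ∈ 𝒮, (W \ X).Infinite)
    {X₀ : Set α} (hX₀ : X₀ ∈ 𝒮) :
    ∃ S : ℕ → Set α, S 0 = X₀ ∧ (∀ n, S n ∈ 𝒮) ∧ (∀ n, S n ⊆ S (n + 1)) ∧
      (∀ n, (S (n + 1) \ S n).Infinite) ∧ ∀ Y ∈ 𝒮, ∃ n, Y ⊆ S n := by
  obtain ⟨V, rfl⟩ := h𝒮.exists_eq_range ⟨X₀, hX₀⟩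
  choose! W hW hWgrow using hgrow
  let S : ℕ → Set α := fun n => Nat.rec X₀ (fun n X => X ∪ V n ∪ W (X ∪ V n)) n
  have hS : ∀ n, S n ∈ range V := fun n => by
    induction n with
    | zero => exact hX₀
    | succ n ih =>
      have h := hunion _ ih _ ⟨n, rfl⟩
      exact hunion _ h _ (hW _ h)
  refine ⟨S, rfl, hS, fun n => subset_union_left.trans subset_union_left, fun n => ?_, ?_⟩
  · exact (hWgrow _ (hunion _ (hS n) _ ⟨n, rfl⟩)).mono
      fun x hx => ⟨Or.inr hx.1, fun h => hx.2 (Or.inl h)⟩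
  · rintro _ ⟨n, rfl⟩
    exact ⟨n + 1, subset_union_right.trans subset_union_left⟩

section RMaximalUnion

variable {A A1 : Set ℕ}

theorem compl_union_diff_infinite (hA1 : CESet A1) (hdisj : Disjoint A A1)
    (hsingle : ∀ X, ¬ Generates A {X}) {E : Set ℕ} (hE : CESet E) (hEA : Disjoint E A) :
    ((A ∪ A1)ᶜ \ E).Infinite := by
  intro hfin
  refine hsingle (A1 ∪ E) (generates_singleton (hA1.union hE)
    (disjoint_union_left.mpr ⟨hdisj.symm, hEA⟩) fun D _ hDA => hfin.subset ?_)
  rintro x ⟨hxD, hxU⟩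
  simp only [mem_union, not_or] at hxU
  exact ⟨by simp [disjoint_left.mp hDA hxD, hxU.1], hxU.2⟩

theorem ComputableSet.inter_compl_union_finite {R : Set ℕ} (hR : ComputableSet R)
    (hRA : Disjoint R A) (hA1 : CESet A1) (hdisj : Disjoint A A1) (hrmax : RMaximal (A ∪ A1))
    (hsingle : ∀ X, ¬ Generates A {X}) : (R ∩ (A ∪ A1)ᶜ).Finite :=
  (hrmax.2.2 R hR).resolve_right fun h =>
    compl_union_diff_infinite hA1 hdisj hsingle hR.ceSet hRA (h.subset fun _ hx => ⟨hx.2, hx.1⟩)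

theorem CESet.finite_of_inter_finite {C : Set ℕ} (hC : CESet C) (hCA : Disjoint C A)
    (hCA1 : (C ∩ A1).Finite) (hA1 : CESet A1) (hdisj : Disjoint A A1)
    (hrmax : RMaximal (A ∪ A1)) (hsingle : ∀ X, ¬ Generates A {X}) : C.Finite := by
  by_contra hinf
  obtain ⟨R, hR, hRC, hRinf⟩ := hC.exists_computable_subset hinf
  refine hRinf ((hCA1.union (hR.inter_compl_union_finite (hCA.mono_left hRC) hA1 hdisj hrmax
    hsingle)).subset fun x hx => ?_)
  by_cases hxA1 : x ∈ A1
  · exact Or.inl ⟨hRC hx, hxA1⟩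
  · exact Or.inr ⟨hx, by simp [disjoint_left.mp hCA (hRC hx), hxA1]⟩

theorem Generates.exists_inter_compl_union_infinite (hA1 : CESet A1) (hdisj : Disjoint A A1)
    (hsingle : ∀ X, ¬ Generates A {X}) {G F₀ : Set (Set ℕ)} (hG : Generates A G)
    (hF₀ : F₀.Finite) (hF₀G : F₀ ⊆ G) : ∃ X ∈ G, X ∉ F₀ ∧ (X ∩ (A ∪ A1)ᶜ).Infinite := by
  by_contra! hfin
  have hU : CESet (⋃₀ F₀) := ceSet_sUnion hF₀ fun X hX => hG.ceSet (hF₀G hX)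
  have hUA : Disjoint (⋃₀ F₀) A := disjoint_sUnion_left.mpr fun X hX => hG.disjoint (hF₀G hX)
  refine hsingle (A1 ∪ ⋃₀ F₀) (generates_singleton (hA1.union hU)
    (disjoint_union_left.mpr ⟨hdisj.symm, hUA⟩) fun D hD hDA => ?_)
  obtain ⟨F, hFG, hF, hDF⟩ := hG.exists_subsetStar hD hDA
  refine (hDF.union (hF.sdiff.biUnion fun X hX => hfin X (hFG hX.1) hX.2)).subset ?_
  rintro x ⟨hxD, hxU⟩
  simp only [mem_union, not_or] at hxU
  by_cases hxF : x ∈ ⋃₀ F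
  · obtain ⟨X, hXF, hxX⟩ := hxF
    refine Or.inr (mem_biUnion ⟨hXF, fun hX => hxU.2 ⟨X, hX, hxX⟩⟩ ⟨hxX, ?_⟩)
    simp [disjoint_left.mp hDA hxD, hxU.1]
  · exact Or.inl ⟨hxD, hxF⟩

theorem Generates.false_of_pairwiseDisjoint_or_computable (hA1 : CESet A1)
    (hdisj : Disjoint A A1) (hrmax : RMaximal (A ∪ A1)) (hsingle : ∀ X, ¬ Generates A {X})
    {G P : Set (Set ℕ)} (hG : Generates A G) (hP : P.PairwiseDisjoint id)
    (hGP : ∀ X ∈ G, X ∈ P ∨ ComputableSet X) : False := by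
  obtain ⟨F, hFG, hF, hA1F⟩ := hG.exists_subsetStar hA1 hdisj.symm
  obtain ⟨X, hXG, hXF, hXinf⟩ := hG.exists_inter_compl_union_infinite hA1 hdisj hsingle
    (hF.inter_of_left P) (inter_subset_left.trans hFG)
  have hXA := hG.disjoint hXG
  refine hXinf ?_
  rcases hGP X hXG with hXP | hX
  · have hXF : X ∉ F := fun h => hXF ⟨h, hXP⟩
    have hR : ComputableSet (⋃₀ (F \ P)) := computableSet_sUnion hF.sdiff
      fun Y hY => (hGP Y (hFG hY.1)).resolve_left hY.2
    have hRA : Disjoint (⋃₀ (F \ P)) A :=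
      disjoint_sUnion_left.mpr fun Y hY => hG.disjoint (hFG hY.1)
    have hCA1 : ((X \ ⋃₀ (F \ P)) ∩ A1).Finite := by
      refine hA1F.subset fun x ⟨⟨hxX, hxR⟩, hxA1⟩ => ⟨hxA1, fun ⟨Y, hYF, hxY⟩ => ?_⟩
      by_cases hYP : Y ∈ P
      · exact disjoint_left.mp (hP hXP hYP fun h => hXF (h ▸ hYF)) hxX hxY
      · exact hxR ⟨Y, ⟨hYF, hYP⟩, hxY⟩
    have hC := ((hG.ceSet hXG).diff hR).finite_of_inter_finite
      (hXA.mono_left sdiff_subset) hCA1 hA1 hdisj hrmax hsingle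
    refine (hC.union (hR.inter_compl_union_finite hRA hA1 hdisj hrmax hsingle)).subset
      fun x ⟨hxX, hxM⟩ => ?_
    by_cases hxR : x ∈ ⋃₀ (F \ P)
    · exact Or.inr ⟨hxR, hxM⟩
    · exact Or.inl ⟨hxX, hxR⟩
  · exact hX.inter_compl_union_finite hXA hA1 hdisj hrmax hsingle

theorem Generates.false_of_monotone_of_computable (hA1 : CESet A1) (hdisj : Disjoint A A1)
    (hrmax : RMaximal (A ∪ A1)) (hsingle : ∀ X, ¬ Generates A {X}) {D R : ℕ → Set ℕ}
    (hG : Generates A (range D ∪ range R)) (hD : Monotone D)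
    (hR : ∀ j, ComputableSet (R j)) (hRinj : Injective R)
    (hRdisj : Pairwise (Disjoint on R)) (hRD : ∀ l, {j | (R j \ D l).Infinite}.Infinite) :
    False := by
  obtain ⟨F, hFG, hF, hA1F⟩ := hG.exists_subsetStar hA1 hdisj.symm
  obtain ⟨s, -, hs, hsF⟩ : ∃ s ⊆ univ, s.Finite ∧ F ∩ range D = D '' s :=
    exists_subset_image_finite_and.mp
      ⟨F ∩ range D, by rw [image_univ]; exact inter_subset_right, hF.inter_of_left _, rfl⟩
  obtain ⟨l, hl⟩ := hs.bddAbove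
  obtain ⟨j, hjinf, hjF⟩ := ((hRD l).sdiff (hF.preimage hRinj.injOn)).nonempty
  have hRjA := hG.disjoint (Or.inr ⟨j, rfl⟩)
  have hRjM := (hR j).inter_compl_union_finite hRjA hA1 hdisj hrmax hsingle
  refine hjinf ((hA1F.union hRjM).subset fun x ⟨hxR, hxD⟩ => ?_)
  by_cases hxA1 : x ∈ A1
  · refine Or.inl ⟨hxA1, fun ⟨Y, hYF, hxY⟩ => ?_⟩
    rcases hFG hYF with ⟨i, rfl⟩ | ⟨k, rfl⟩
    · obtain ⟨i', hi', hDi⟩ := hsF.le (show D i ∈ F ∩ range D from ⟨hYF, i, rfl⟩)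
      exact hxD (hD (hl hi') (hDi ▸ hxY))
    · exact disjoint_left.mp (hRdisj fun h => hjF (by subst h; exact hYF)) hxR hxY
  · exact Or.inr ⟨hxR, by simp [disjoint_left.mp hRjA hxR, hxA1]⟩

theorem not_hasGenOfType_of_le_nine (hA1 : CESet A1) (hdisj : Disjoint A A1)
    (hrmax : RMaximal (A ∪ A1)) (hsingle : ∀ X, ¬ Generates A {X}) {m : ℕ} (h4 : 4 ≤ m)
    (h9 : m ≤ 9) : ¬ HasGenOfType A m := by
  rintro ⟨G, hG, hm⟩
  have key : ∀ P : Set (Set ℕ), P.PairwiseDisjoint id → (∀ X ∈ G, X ∈ P ∨ ComputableSet X) →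
      False := fun P => hG.false_of_pairwiseDisjoint_or_computable hA1 hdisj hrmax hsingle
  interval_cases m
  · obtain ⟨R, rfl, -, hR, -⟩ := hm
    exact key _ pairwiseDisjoint_empty (by rintro _ ⟨i, rfl⟩; exact Or.inr (hR i).1)
  · obtain ⟨D0, R, rfl, -, -, -, -, -, hR, -⟩ := hm
    exact key _ (pairwiseDisjoint_singleton D0 id)
      (by rintro _ (rfl | ⟨i, rfl⟩); exacts [Or.inl rfl, Or.inr (hR i).1])
  · obtain ⟨D, rfl, -, -, hD⟩ := hm
    exact key _ hD.range_pairwise fun X hX => Or.inl hX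
  · obtain ⟨D0, R, rfl, -, -, -, -, hR, -⟩ := hm
    exact key _ (pairwiseDisjoint_singleton D0 id)
      (by rintro _ (rfl | ⟨i, rfl⟩); exacts [Or.inl rfl, Or.inr (hR i).1])
  · obtain ⟨D, R, rfl, -, -, -, -, hD, hR, -⟩ := hm
    exact key _ hD.range_pairwise
      (by rintro _ (⟨i, rfl⟩ | ⟨i, rfl⟩); exacts [Or.inl ⟨i, rfl⟩, Or.inr (hR i).1])
  · obtain ⟨D, R, rfl, hRinj, -, hR, hRdisj, -, hnest, -, hRD⟩ := hm
    exact hG.false_of_monotone_of_computable hA1 hdisj hrmax hsingle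
      (monotone_nat_of_le_succ hnest) (fun j => (hR j).1) hRinj hRdisj hRD

theorem hasGenOfType_ten (hA1 : CESet A1) (hdisj : Disjoint A A1) (hrmax : RMaximal (A ∪ A1))
    (hsingle : ∀ X, ¬ Generates A {X}) : HasGenOfType A 10 := by
  obtain ⟨S, rfl, hS, hSsucc, hSgrow, hScof⟩ :=
    (countable_setOf_ceSet.mono fun X hX => hX.1 :
      {X | CESet X ∧ Disjoint X A}.Countable).exists_cofinal_chain
      (fun X hX Y hY => ⟨hX.1.union hY.1, disjoint_union_left.mpr ⟨hX.2, hY.2⟩⟩)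
      (fun X hX => by
        obtain ⟨W, hW, hWA, hWX⟩ := exists_ceSet_diff_infinite hsingle hX.1 hX.2
        exact ⟨W, ⟨hW, hWA⟩, hWX⟩)
      ⟨hA1, hdisj.symm⟩
  have hmono : Monotone S := monotone_nat_of_le_succ hSsucc
  have hgen : Generates A (range fun n => S (n + 1)) := by
    refine generates_of_forall_subsetStar (countable_range _) (by rintro _ ⟨n, rfl⟩; exact (hS _).1)
      (by rintro _ ⟨n, rfl⟩; exact (hS _).2) fun D hD hDA => ?_
    obtain ⟨n, hn⟩ := hScof D ⟨hD, hDA⟩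
    exact ⟨S (n + 1), ⟨n, rfl⟩, by simp [SubsetStar, sdiff_eq_empty.mpr (hn.trans (hSsucc n))]⟩
  have hdiffA1 : ∀ n, (S (n + 1) \ S 0).Infinite := fun n =>
    (hSgrow 0).mono (sdiff_subset_sdiff_left (hmono (by omega)))
  have hnoncomp : ∀ n, ¬ ComputableSet (S (n + 1)) := fun n hcomp => by
    refine hdiffA1 n ((hcomp.inter_compl_union_finite (hS _).2 (hS 0).1 hdisj hrmax
      hsingle).subset fun x hx => ⟨hx.1, ?_⟩)
    simp [disjoint_left.mp (hS _).2 hx.1, hx.2]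
  have hnotce : ∀ n, ¬ CESet (S (n + 2) \ S (n + 1)) := fun n hce => by
    refine hSgrow (n + 1) (hce.finite_of_inter_finite ((hS _).2.mono_left sdiff_subset)
      (finite_empty.subset ?_) (hS 0).1 hdisj hrmax hsingle)
    rintro x ⟨hx, hxA1⟩
    exact hx.2 (hmono (Nat.zero_le _) hxA1)
  exact ⟨_, hgen, fun n => S (n + 1), rfl,
    fun n => ⟨(hS _).1, hnoncomp n, (hdiffA1 n).mono sdiff_subset⟩, fun n => hSsucc _, hnotce⟩

end RMaximalUnion

theorem stmt_11_general (A A1 : Set ℕ) (hA1 : CESet A1)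
    (hdisj : Disjoint A A1) (hrmax : RMaximal (A ∪ A1))
    (h1 : ¬ SetOfType A 1) (h2 : ¬ SetOfType A 2) (h3 : ¬ SetOfType A 3) :
    SetOfType A 10 := by
  have hlow : ∀ m ≤ 3, ¬ HasGenOfType A m := fun m hm h => by
    obtain ⟨k, hk, hkA⟩ := exists_le_setOfType h
    have hk3 : k ≤ 3 := hk.trans hm
    interval_cases k
    exacts [not_hasGenOfType_zero hkA.1, h1 hkA, h2 hkA, h3 hkA]
  have hsingle : ∀ X, ¬ Generates A {X} := fun X hX => by
    obtain ⟨m, hm, h⟩ := exists_le_three_hasGenOfType_of_generates_singleton hX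
    exact hlow m hm h
  refine ⟨hasGenOfType_ten hA1 hdisj hrmax hsingle, fun m hm => ?_⟩
  rcases Nat.lt_or_ge m 4 with h | h
  · exact hlow m (by omega)
  · exact not_hasGenOfType_of_le_nine hA1 hdisj hrmax hsingle h (by omega)

theorem stmt_11 (A A1 : Set ℕ) (hA : CESet A) (hA1 : CESet A1)
    (hdisj : Disjoint A A1) (hrmax : RMaximal (A ∪ A1))
    (h1 : ¬ SetOfType A 1) (h2 : ¬ SetOfType A 2) (h3 : ¬ SetOfType A 3) :
    SetOfType A 10 :=
  stmt_11_general A A1 hA1 hdisj hrmax h1 h2 h3
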